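/- Let Λ, Λ₀ be positive definite d×d matrices, β₀ ∈ ℝ^d, S a positive definite d×d matrix, t ∈ ℝ^d with t ≠ 0, and let ε, B_x, B_y > 0. Let Δ be a random symmetric d×d matrix whose upper-triangular (including diagonal) entries are i.i.d. Laplace(0, 2d(d+1)B_x²/ε), and let δ be an independent random vector with i.i.d. Laplace(0, 4dB_xB_y/ε) coordinates. Define μ_NP(n) = (Λ₀ + Λ·nS)⁻¹(Λ·nt + Λ₀β₀) and μ_DP(n) = (Λ₀ + Λ(nS + Δ))⁻¹(Λ(nt + δ) + Λ₀β₀). Then for every α > 0 there exist constants C and N such that for all n ≥ N: Pr{‖μ_DP(n) − μ_NP(n)‖₁ > C/n} < α; that is, the private posterior mean of the regression weights converges to the non-private one at rate O(1/n) with high probability. -/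

import Mathlib

open MeasureTheory ProbabilityTheory Matrix Filter Topology

/-- The Laplace distribution with location `0` and scale `b`,
with density `x ↦ (1/(2b)) · exp (−|x|/b)` with respect to Lebesgue measure. -/
noncomputable def laplaceMeasure (b : ℝ) : Measure ℝ :=
  volume.withDensity fun x => ENNReal.ofReal ((2 * b)⁻¹ * Real.exp (-|x| / b))

/-- The ℓ¹ norm on `ℝ^d`. -/
def l1 {d : ℕ} (v : Fin d → ℝ) : ℝ := ∑ i, |v i|

/-- Index set for the scalar noise variables: the `d(d+1)/2` upper-triangular (including
diagonal) entries of the noise matrix `Δ` and the `d` coordinates of the noise vector `δ`. -/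
def NoiseIdx (d : ℕ) : Type := {p : Fin d × Fin d // p.1 ≤ p.2} ⊕ Fin d

/-- Assemble a symmetric matrix from its upper-triangular (including diagonal) entries. -/
def symMatrixOf {d : ℕ} (u : {p : Fin d × Fin d // p.1 ≤ p.2} → ℝ) :
    Matrix (Fin d) (Fin d) ℝ :=
  fun i k => if h : i ≤ k then u ⟨(i, k), h⟩ else u ⟨(k, i), le_of_not_ge h⟩

/-! The noise does not scale with `n`: a finite family of real random variables is, with
probability at least `1 - α`, bounded by some constant `K`. On that event both posterior means
have the form `(n ΛS + Q)⁻¹ (n Λt + f) = (ΛS + Q/n)⁻¹ (Λt + f/n)` with `‖Q‖, ‖f‖` bounded in terms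
of `K`. Since the inverse is bounded on a neighbourhood of the invertible `ΛS`, the identity
`A⁻¹a - B⁻¹b = A⁻¹ (a - b + (B - A) B⁻¹ b)` shows that both lie within `O(1/n)` of `(ΛS)⁻¹ Λt`. -/

theorem tendsto_measure_lt_atTop {Ω : Type*} [MeasurableSpace Ω] (μ : Measure Ω)
    [IsFiniteMeasure μ] {f : Ω → ℝ} (hf : AEMeasurable f μ) :
    Tendsto (fun r : ℝ => μ {ω | r < f ω}) atTop (𝓝 0) := by
  have hanti : Antitone fun r : ℝ => {ω | r < f ω} :=
    fun r s hrs ω hω => lt_of_le_of_lt hrs hω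
  have hempty : ⋂ r : ℝ, {ω | r < f ω} = ∅ :=
    Set.iInter_eq_empty_iff.2 fun ω => ⟨f ω, lt_irrefl (f ω)⟩
  simpa [hempty, Function.comp_def] using tendsto_measure_iInter_atTop
    (fun r => nullMeasurableSet_lt aemeasurable_const hf) hanti ⟨0, measure_ne_top μ _⟩

theorem NormedRing.exists_eventually_isUnit_add_and_norm_inverse_le {R : Type*} [NormedRing R]
    [HasSummableGeomSeries R] (u : Rˣ) :
    ∃ c, ∀ᶠ t in 𝓝 (0 : R), IsUnit ((u : R) + t) ∧ ‖Ring.inverse ((u : R) + t)‖ ≤ c := by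
  obtain ⟨c, hc⟩ := (NormedRing.inverse_add_norm u).bound
  have hunit : ∀ᶠ t in 𝓝 (0 : R), IsUnit ((u : R) + t) :=
    ((continuous_const_add (u : R)).tendsto' 0 u (add_zero _)).eventually (Units.nhds u)
  exact ⟨c, hunit.and (by simpa using hc)⟩

instance (d : ℕ) : Fintype (NoiseIdx d) :=
  inferInstanceAs (Fintype (_ ⊕ _))

theorem l1_le_card_mul_norm {d : ℕ} (v : Fin d → ℝ) : l1 v ≤ d * ‖v‖ :=
  calc l1 v ≤ ∑ _i : Fin d, ‖v‖ := Finset.sum_le_sum fun i _ => norm_le_pi_norm v i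
    _ = d * ‖v‖ := by simp

section LinftyOpNorm

attribute [local instance] Matrix.linftyOpNormedRing Matrix.linftyOpNormedAlgebra

variable {ι : Type*} [Fintype ι] [DecidableEq ι]

theorem Matrix.inv_smul_of_ne_zero {K : Type*} [Field K] {s : K} (hs : s ≠ 0)
    (A : Matrix ι ι K) : (s • A)⁻¹ = s⁻¹ • A⁻¹ := by
  by_cases hA : IsUnit A.det
  · simpa [Units.smul_def] using inv_smul' A (Units.mk0 s hs) hA
  · have hsA : ¬ IsUnit (s • A).det := by
      simpa [det_smul, hs] using hA
    rw [nonsing_inv_apply_not_isUnit _ hA, nonsing_inv_apply_not_isUnit _ hsA, smul_zero]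

theorem Matrix.inv_smul_add_mulVec_smul_add {K : Type*} [Field K] {s : K} (hs : s ≠ 0)
    (U Q : Matrix ι ι K) (v f : ι → K) :
    (s • U + Q)⁻¹ *ᵥ (s • v + f) = (U + s⁻¹ • Q)⁻¹ *ᵥ (v + s⁻¹ • f) := by
  have hU : s • U + Q = s • (U + s⁻¹ • Q) := by
    rw [smul_add, smul_smul, mul_inv_cancel₀ hs, one_smul]
  have hv : s • v + f = s • (v + s⁻¹ • f) := by
    rw [smul_add, smul_smul, mul_inv_cancel₀ hs, one_smul]
  rw [hU, hv, inv_smul_of_ne_zero hs, smul_mulVec, mulVec_smul, smul_smul,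
    inv_mul_cancel₀ hs, one_smul]

theorem Matrix.inv_mulVec_sub_inv_mulVec {R : Type*} [CommRing R] {A B : Matrix ι ι R}
    (hA : IsUnit A) (hB : IsUnit B) (a b : ι → R) :
    A⁻¹ *ᵥ a - B⁻¹ *ᵥ b = A⁻¹ *ᵥ (a - b + (B - A) *ᵥ (B⁻¹ *ᵥ b)) := by
  rw [mulVec_add, mulVec_mulVec, mulVec_mulVec, ← inv_sub_inv (iff_of_true hA hB), mulVec_sub,
    sub_mulVec]
  abel

theorem Matrix.exists_norm_inv_smul_add_mulVec_smul_add_sub_le {U : Matrix ι ι ℝ} (hU : IsUnit U)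
    (v : ι → ℝ) (M : ℝ) :
    ∃ C : ℝ, ∃ N : ℕ, ∀ n : ℕ, N ≤ n → ∀ (Q : Matrix ι ι ℝ) (f : ι → ℝ), ‖Q‖ ≤ M → ‖f‖ ≤ M →
      ‖((n : ℝ) • U + Q)⁻¹ *ᵥ ((n : ℝ) • v + f) - U⁻¹ *ᵥ v‖ ≤ C / n := by
  obtain ⟨c, hc⟩ := NormedRing.exists_eventually_isUnit_add_and_norm_inverse_le hU.unit
  obtain ⟨δ, hδ, hsmall⟩ := Metric.eventually_nhds_iff.1 hc
  obtain ⟨N, hN⟩ := exists_nat_gt (M / δ)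
  refine ⟨c * (M + M * ‖U⁻¹ *ᵥ v‖), N + 1, fun n hn Q f hQ hf => ?_⟩
  have hn0 : (0 : ℝ) < n := by exact_mod_cast (Nat.succ_pos N).trans_le hn
  have hMδ : M / n < δ := by
    have : M / δ < n := hN.trans_le (by exact_mod_cast (Nat.le_succ N).trans hn)
    rw [div_lt_iff₀ hδ] at this
    rwa [div_lt_iff₀ hn0, mul_comm]
  have hdiv : ∀ x : ℝ, x ≤ M → (n : ℝ)⁻¹ * x ≤ M / n := fun x hx => by
    rw [inv_mul_eq_div]; gcongr
  set E := (n : ℝ)⁻¹ • Q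
  have hE : ‖E‖ ≤ M / n := by
    rw [norm_smul, norm_inv, Real.norm_natCast]; exact hdiv _ hQ
  have hf' : ‖(n : ℝ)⁻¹ • f‖ ≤ M / n := by
    rw [norm_smul, norm_inv, Real.norm_natCast]; exact hdiv _ hf
  obtain ⟨hUE, hUEinv⟩ : IsUnit (U + E) ∧ ‖(U + E)⁻¹‖ ≤ c := by
    simpa [nonsing_inv_eq_ringInverse] using
      hsmall (y := E) (by rw [dist_zero_right]; exact hE.trans_lt hMδ)
  rw [inv_smul_add_mulVec_smul_add hn0.ne', inv_mulVec_sub_inv_mulVec hUE hU,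
    add_sub_cancel_left, sub_add_cancel_left, neg_mulVec]
  calc ‖(U + E)⁻¹ *ᵥ ((n : ℝ)⁻¹ • f + -(E *ᵥ (U⁻¹ *ᵥ v)))‖
      ≤ ‖(U + E)⁻¹‖ * (‖(n : ℝ)⁻¹ • f‖ + ‖E‖ * ‖U⁻¹ *ᵥ v‖) := by
        refine (linfty_opNorm_mulVec _ _).trans (mul_le_mul_of_nonneg_left ?_ (norm_nonneg _))
        refine (norm_add_le _ _).trans ?_
        rw [norm_neg]
        gcongr
        exact linfty_opNorm_mulVec E (U⁻¹ *ᵥ v)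
    _ ≤ c * (M / n + M / n * ‖U⁻¹ *ᵥ v‖) := by
        gcongr
        · exact (norm_nonneg _).trans hUEinv
    _ = c * (M + M * ‖U⁻¹ *ᵥ v‖) / n := by ring

/-- The posterior mean of the regression weights given the sufficient statistics `A = ∑ xᵢxᵢᵀ`
and `b = ∑ xᵢyᵢ`. -/
noncomputable def posteriorMean (Λ Λ₀ : Matrix ι ι ℝ) (β₀ : ι → ℝ) (A : Matrix ι ι ℝ)
    (b : ι → ℝ) : ι → ℝ :=
  (Λ₀ + Λ * A)⁻¹ *ᵥ (Λ *ᵥ b + Λ₀ *ᵥ β₀)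

theorem exists_norm_posteriorMean_sub_le {Λ S : Matrix ι ι ℝ} (hΛS : IsUnit (Λ * S))
    (Λ₀ : Matrix ι ι ℝ) (β₀ t : ι → ℝ) (K : ℝ) :
    ∃ C : ℝ, ∃ N : ℕ, ∀ n : ℕ, N ≤ n → ∀ (Δ : Matrix ι ι ℝ) (δ : ι → ℝ), ‖Δ‖ ≤ K → ‖δ‖ ≤ K →
      ‖posteriorMean Λ Λ₀ β₀ ((n : ℝ) • S + Δ) ((n : ℝ) • t + δ)
        - posteriorMean Λ Λ₀ β₀ ((n : ℝ) • S) ((n : ℝ) • t)‖ ≤ C / n := by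
  obtain ⟨C, N, hC⟩ := exists_norm_inv_smul_add_mulVec_smul_add_sub_le hΛS (Λ *ᵥ t)
    (‖Λ₀‖ + ‖Λ‖ * K + ‖Λ₀ *ᵥ β₀‖)
  set μ := (Λ * S)⁻¹ *ᵥ (Λ *ᵥ t)
  have hlimit : ∀ n : ℕ, N ≤ n → ∀ (Δ : Matrix ι ι ℝ) (δ : ι → ℝ), ‖Δ‖ ≤ K → ‖δ‖ ≤ K →
      ‖posteriorMean Λ Λ₀ β₀ ((n : ℝ) • S + Δ) ((n : ℝ) • t + δ) - μ‖ ≤ C / n := by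
    intro n hn Δ δ hΔ hδ
    have hK : 0 ≤ K := (norm_nonneg _).trans hΔ
    have hA : Λ₀ + Λ * ((n : ℝ) • S + Δ) = (n : ℝ) • (Λ * S) + (Λ₀ + Λ * Δ) := by
      rw [Matrix.mul_add, Matrix.mul_smul]; abel
    have hb : Λ *ᵥ ((n : ℝ) • t + δ) + Λ₀ *ᵥ β₀ = (n : ℝ) • (Λ *ᵥ t) + (Λ *ᵥ δ + Λ₀ *ᵥ β₀) := by
      rw [mulVec_add, mulVec_smul]; abel
    rw [posteriorMean, hA, hb]
    refine hC n hn _ _ ?_ ?_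
    · calc ‖Λ₀ + Λ * Δ‖ ≤ ‖Λ₀‖ + ‖Λ‖ * K :=
            (norm_add_le _ _).trans (by gcongr; exact (linfty_opNorm_mul _ _).trans (by gcongr))
        _ ≤ _ := le_add_of_nonneg_right (norm_nonneg _)
    · calc ‖Λ *ᵥ δ + Λ₀ *ᵥ β₀‖ ≤ ‖Λ‖ * K + ‖Λ₀ *ᵥ β₀‖ :=
            (norm_add_le _ _).trans (by gcongr; exact (linfty_opNorm_mulVec _ _).trans (by gcongr))
        _ ≤ _ := by gcongr; exact le_add_of_nonneg_left (norm_nonneg _)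
  refine ⟨2 * C, N, fun n hn Δ δ hΔ hδ => ?_⟩
  have hK : 0 ≤ K := (norm_nonneg _).trans hΔ
  have hNP := hlimit n hn 0 0 (by simpa using hK) (by simpa using hK)
  rw [add_zero, add_zero] at hNP
  calc _ ≤ _ + _ := norm_sub_le_norm_sub_add_norm_sub _ μ _
    _ ≤ C / n + C / n := by
        rw [norm_sub_rev μ]; exact add_le_add (hlimit n hn Δ δ hΔ hδ) hNP
    _ = 2 * C / n := by ring

theorem norm_symMatrixOf_le {d : ℕ} (u : {p : Fin d × Fin d // p.1 ≤ p.2} → ℝ) :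
    ‖symMatrixOf u‖ ≤ d * ‖u‖ := by
  have : ‖symMatrixOf u‖₊ ≤ d * ‖u‖₊ := by
    rw [linfty_opNNNorm_def]
    refine Finset.sup_le fun i _ => ?_
    calc ∑ k, ‖symMatrixOf u i k‖₊ ≤ ∑ _k : Fin d, ‖u‖₊ := Finset.sum_le_sum fun k _ => by
          unfold symMatrixOf; split_ifs <;> exact nnnorm_le_pi_nnnorm u _
      _ = d * ‖u‖₊ := by simp
  exact_mod_cast this

theorem exists_l1_posteriorMean_sub_le_of_norm_noise_le {d : ℕ}
    {Λ S : Matrix (Fin d) (Fin d) ℝ} (hΛS : IsUnit (Λ * S)) (Λ₀ : Matrix (Fin d) (Fin d) ℝ)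
    (β₀ t : Fin d → ℝ) (K : ℝ) :
    ∃ C : ℝ, ∃ N : ℕ, ∀ n : ℕ, N ≤ n → ∀ w : NoiseIdx d → ℝ, ‖w‖ ≤ K →
      l1 (posteriorMean Λ Λ₀ β₀ ((n : ℝ) • S + symMatrixOf fun p => w (Sum.inl p))
            ((n : ℝ) • t + fun i => w (Sum.inr i))
          - posteriorMean Λ Λ₀ β₀ ((n : ℝ) • S) ((n : ℝ) • t)) ≤ C / n := by
  obtain ⟨C, N, hC⟩ := exists_norm_posteriorMean_sub_le hΛS Λ₀ β₀ t (max (d * K) K)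
  refine ⟨d * C, N, fun n hn w hw => ?_⟩
  have hK : 0 ≤ K := (norm_nonneg _).trans hw
  have hcoord : ∀ i, ‖w i‖ ≤ K := fun i => (norm_le_pi_norm w i).trans hw
  have hΔ : ‖symMatrixOf fun p => w (Sum.inl p)‖ ≤ max (d * K) K :=
    ((norm_symMatrixOf_le _).trans (by
      gcongr; exact (pi_norm_le_iff_of_nonneg hK).2 fun p => hcoord _)).trans (le_max_left _ _)
  have hδ : ‖fun i => w (Sum.inr i)‖ ≤ max (d * K) K :=
    ((pi_norm_le_iff_of_nonneg hK).2 fun i => hcoord _).trans (le_max_right _ _)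
  calc l1 _ ≤ d * ‖_‖ := l1_le_card_mul_norm _
    _ ≤ d * (C / n) := by gcongr; exact hC n hn _ _ hΔ hδ
    _ = d * C / n := (mul_div_assoc _ _ _).symm

end LinftyOpNorm

theorem stmt_15_general {d : ℕ} (Λ Λ₀ : Matrix (Fin d) (Fin d) ℝ)
    (hΛ : Λ.PosDef) (β₀ : Fin d → ℝ)
    (S : Matrix (Fin d) (Fin d) ℝ) (hS : S.PosDef) (t : Fin d → ℝ)
    {Ω : Type*} [MeasurableSpace Ω] (P : Measure Ω) [IsProbabilityMeasure P]
    (noise : NoiseIdx d → Ω → ℝ) (hmeas : ∀ idx, Measurable (noise idx)) :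
    ∀ α : ℝ, 0 < α → ∃ (C : ℝ) (N : ℕ), ∀ n ≥ N,
      P {ω | C / n <
          l1 ((Λ₀ + Λ * ((n : ℝ) • S + symMatrixOf fun p => noise (Sum.inl p) ω))⁻¹
                *ᵥ (Λ *ᵥ ((n : ℝ) • t + fun i => noise (Sum.inr i) ω) + Λ₀ *ᵥ β₀)
              - (Λ₀ + Λ * ((n : ℝ) • S))⁻¹ *ᵥ (Λ *ᵥ ((n : ℝ) • t) + Λ₀ *ᵥ β₀))}
        < ENNReal.ofReal α := by
  intro α hα
  obtain ⟨K, htail⟩ := ((tendsto_measure_lt_atTop P (measurable_pi_lambda _ hmeas).norm.aemeasurable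
    ).eventually (gt_mem_nhds (ENNReal.ofReal_pos.2 hα))).exists
  have hΛS : IsUnit (Λ * S) := by
    rw [isUnit_iff_isUnit_det, det_mul]
    exact (mul_pos hΛ.det_pos hS.det_pos).ne'.isUnit
  obtain ⟨C, N, hC⟩ := exists_l1_posteriorMean_sub_le_of_norm_noise_le hΛS Λ₀ β₀ t K
  refine ⟨C, N, fun n hn => (measure_mono fun ω hω => ?_).trans_lt htail⟩
  by_contra hnoise
  rw [Set.mem_ofPred_eq, not_lt] at hnoise
  rw [Set.mem_ofPred_eq] at hω
  have hbound := hC n hn _ hnoise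
  unfold posteriorMean at hbound
  exact hω.not_ge hbound

/-- **Asymptotic efficiency of ε-differentially private Bayesian linear regression.**
With the random symmetric Laplace noise matrix `Δ` (i.i.d. `Laplace(0, 2d(d+1)Bx²/ε)`
upper-triangular entries) perturbing `n·x̄x̄ = nS` and the independent Laplace noise vector
`δ` (i.i.d. `Laplace(0, 4dBxBy/ε)` coordinates) perturbing `n·x̄y = nt`, the private
posterior mean `μ_DP(n) = (Λ₀ + Λ(nS + Δ))⁻¹(Λ(nt + δ) + Λ₀β₀)` converges to the
non-private one `μ_NP(n) = (Λ₀ + Λ·nS)⁻¹(Λ·nt + Λ₀β₀)` at rate `O(1/n)`: for every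
`α > 0` there exist `C`, `N` with `Pr{‖μ_DP(n) − μ_NP(n)‖₁ > C/n} < α` for all `n ≥ N`. -/
theorem stmt_15 {d : ℕ} (hd : 0 < d) (Λ Λ₀ : Matrix (Fin d) (Fin d) ℝ)
    (hΛ : Λ.PosDef) (hΛ₀ : Λ₀.PosDef) (β₀ : Fin d → ℝ)
    (S : Matrix (Fin d) (Fin d) ℝ) (hS : S.PosDef) (t : Fin d → ℝ) (ht : t ≠ 0)
    (ε Bx By : ℝ) (hε : 0 < ε) (hBx : 0 < Bx) (hBy : 0 < By)
    {Ω : Type*} [MeasurableSpace Ω] (P : Measure Ω) [IsProbabilityMeasure P]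
    (noise : NoiseIdx d → Ω → ℝ) (hmeas : ∀ idx, Measurable (noise idx))
    (hlawΔ : ∀ p, Measure.map (noise (Sum.inl p)) P
      = laplaceMeasure (2 * d * (d + 1) * Bx ^ 2 / ε))
    (hlawδ : ∀ i, Measure.map (noise (Sum.inr i)) P
      = laplaceMeasure (4 * d * Bx * By / ε))
    (hindep : iIndepFun
      noise P) :
    ∀ α : ℝ, 0 < α → ∃ (C : ℝ) (N : ℕ), ∀ n ≥ N,
      P {ω | C / n <
          l1 ((Λ₀ + Λ * ((n : ℝ) • S + symMatrixOf fun p => noise (Sum.inl p) ω))⁻¹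
                *ᵥ (Λ *ᵥ ((n : ℝ) • t + fun i => noise (Sum.inr i) ω) + Λ₀ *ᵥ β₀)
              - (Λ₀ + Λ * ((n : ℝ) • S))⁻¹ *ᵥ (Λ *ᵥ ((n : ℝ) • t) + Λ₀ *ᵥ β₀))}
        < ENNReal.ofReal α :=
  stmt_15_general Λ Λ₀ hΛ β₀ S hS t P noise hmeas
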